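/- arXiv:1810.00080 — 2 statements merged into one kernel-verified Lean document; each statement's English description precedes it below -/
import Mathlib

section
/- Let φ ≠ 0, c ∈ ℝ and let x, y, z : I → ℝ be differentiable on an interval I. For the pseudo-isotropic helicoidal surface of ni-type Yh₂(u,t) = (x(u)cosh(tφ) + y(u)sinh(tφ), x(u)sinh(tφ) + y(u)cosh(tφ), c t), the coefficients of the first fundamental form with respect to ⟨·,·⟩_pz satisfy g₁₁g₂₂ − g₁₂² = −φ²(x x' − y y')². For the helicoidal surface of i-type Zh₂(u,t) = (x(u)cosh(tφ), x(u)sinh(tφ), z(u) + c t), one has g₁₁g₂₂ − g₁₂² = −φ²(x x')². -/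
/-!
Only the first two coordinates enter `⟨·,·⟩_pz`, and on that Lorentzian plane the Gram
determinant of two vectors is minus the square of their ordinary `2 × 2` determinant. For a
helicoidal surface the `t`-derivative is `φ` times the hyperbolic rotation of the profile point,
the `u`-derivative is the hyperbolic rotation of the profile tangent, and hyperbolic rotations have
determinant `cosh² − sinh² = 1`; so the determinant is `φ (x x' − y y')`. The i-type surface is
the ni-type one with `y = 0`, up to the third coordinate, which does not matter.
-/

/-- The determinant `g₁₁g₂₂ − g₁₂²` of the first fundamental form of a parametrized
surface `X(u,t)` in pseudo-isotropic space, where `⟨u,v⟩_pz = u₁v₁ − u₂v₂`. -/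
noncomputable def pseudoIsoGramDet (X : ℝ → ℝ → ℝ × ℝ × ℝ) (u t : ℝ) : ℝ :=
  let Xu := deriv (fun u' => X u' t) u
  let Xt := deriv (fun t' => X u t') t
  (Xu.1 ^ 2 - Xu.2.1 ^ 2) * (Xt.1 ^ 2 - Xt.2.1 ^ 2)
    - (Xu.1 * Xt.1 - Xu.2.1 * Xt.2.1) ^ 2

theorem pseudoIsoGramDet_eq_of_hasDerivAt {X : ℝ → ℝ → ℝ × ℝ × ℝ} {u t : ℝ}
    {Xu Xt : ℝ × ℝ × ℝ} (hXu : HasDerivAt (fun u' => X u' t) Xu u)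
    (hXt : HasDerivAt (fun t' => X u t') Xt t) :
    pseudoIsoGramDet X u t = -(Xu.1 * Xt.2.1 - Xu.2.1 * Xt.1) ^ 2 := by
  rw [pseudoIsoGramDet, hXu.deriv, hXt.deriv]
  ring

noncomputable def helicoidalSurface (φ : ℝ) (x y : ℝ → ℝ) (h : ℝ → ℝ → ℝ) :
    ℝ → ℝ → ℝ × ℝ × ℝ := fun u t =>
  (x u * Real.cosh (t * φ) + y u * Real.sinh (t * φ),
   x u * Real.sinh (t * φ) + y u * Real.cosh (t * φ), h u t)

section helicoidalSurface

variable {φ : ℝ} {x y : ℝ → ℝ} {h : ℝ → ℝ → ℝ} {u t : ℝ}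

theorem hasDerivAt_helicoidalSurface_profile {x' y' hu : ℝ} (hx : HasDerivAt x x' u)
    (hy : HasDerivAt y y' u) (hh : HasDerivAt (fun u' => h u' t) hu u) :
    HasDerivAt (fun u' => helicoidalSurface φ x y h u' t)
      (x' * Real.cosh (t * φ) + y' * Real.sinh (t * φ),
       x' * Real.sinh (t * φ) + y' * Real.cosh (t * φ), hu) u :=
  ((hx.mul_const _).add (hy.mul_const _)).prodMk
    (((hx.mul_const _).add (hy.mul_const _)).prodMk hh)

theorem hasDerivAt_helicoidalSurface_rotation {ht : ℝ} (hh : HasDerivAt (h u) ht t) :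
    HasDerivAt (fun t' => helicoidalSurface φ x y h u t')
      (x u * (Real.sinh (t * φ) * φ) + y u * (Real.cosh (t * φ) * φ),
       x u * (Real.cosh (t * φ) * φ) + y u * (Real.sinh (t * φ) * φ), ht) t :=
  have hcosh := (hasDerivAt_mul_const φ).cosh (x := t)
  have hsinh := (hasDerivAt_mul_const φ).sinh (x := t)
  ((hcosh.const_mul _).add (hsinh.const_mul _)).prodMk
    (((hsinh.const_mul _).add (hcosh.const_mul _)).prodMk hh)

theorem pseudoIsoGramDet_helicoidalSurface (hx : DifferentiableAt ℝ x u)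
    (hy : DifferentiableAt ℝ y u) (hhu : DifferentiableAt ℝ (fun u' => h u' t) u)
    (hht : DifferentiableAt ℝ (h u) t) :
    pseudoIsoGramDet (helicoidalSurface φ x y h) u t
      = -(φ ^ 2) * (x u * deriv x u - y u * deriv y u) ^ 2 := by
  rw [pseudoIsoGramDet_eq_of_hasDerivAt
    (hasDerivAt_helicoidalSurface_profile hx.hasDerivAt hy.hasDerivAt hhu.hasDerivAt)
    (hasDerivAt_helicoidalSurface_rotation hht.hasDerivAt)]
  linear_combination (-(φ ^ 2) * (x u * deriv x u - y u * deriv y u) ^ 2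
    * (Real.cosh (t * φ) ^ 2 - Real.sinh (t * φ) ^ 2 + 1)) * Real.cosh_sq_sub_sinh_sq (t * φ)

end helicoidalSurface

theorem pseudoIsotropic_helicoidal_gramDet_general
    (φ c : ℝ) (I : Set ℝ) (x y z : ℝ → ℝ)
    (hx : ∀ u ∈ I, DifferentiableAt ℝ x u)
    (hy : ∀ u ∈ I, DifferentiableAt ℝ y u)
    (hz : ∀ u ∈ I, DifferentiableAt ℝ z u) :
    ∀ u ∈ I, ∀ t : ℝ,
      (pseudoIsoGramDet (fun u' t' =>
          (x u' * Real.cosh (t' * φ) + y u' * Real.sinh (t' * φ),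
           x u' * Real.sinh (t' * φ) + y u' * Real.cosh (t' * φ),
           c * t')) u t
        = -(φ ^ 2) * (x u * deriv x u - y u * deriv y u) ^ 2) ∧
      (pseudoIsoGramDet (fun u' t' =>
          (x u' * Real.cosh (t' * φ), x u' * Real.sinh (t' * φ), z u' + c * t')) u t
        = -(φ ^ 2) * (x u * deriv x u) ^ 2) := by
  intro u hu t
  constructor
  · exact pseudoIsoGramDet_helicoidalSurface (h := fun _ t' => c * t') (t := t)
      (hx u hu) (hy u hu) (by fun_prop) (by fun_prop)
  · have hiType : (fun u' t' =>
        (x u' * Real.cosh (t' * φ), x u' * Real.sinh (t' * φ), z u' + c * t'))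
        = helicoidalSurface φ x (fun _ => 0) (fun u' t' => z u' + c * t') := by
      funext u' t'
      simp [helicoidalSurface]
    rw [hiType, pseudoIsoGramDet_helicoidalSurface (h := fun u' t' => z u' + c * t') (t := t)
      (hx u hu) (differentiableAt_const 0) ((hz u hu).add_const _) (by fun_prop)]
    simp

/-- First fundamental form determinant of pseudo-isotropic helicoidal
surfaces of ni-type and i-type. -/
theorem pseudoIsotropic_helicoidal_gramDet
    (φ c : ℝ) (hφ : φ ≠ 0) (I : Set ℝ) (x y z : ℝ → ℝ)
    (hx : ∀ u ∈ I, DifferentiableAt ℝ x u)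
    (hy : ∀ u ∈ I, DifferentiableAt ℝ y u)
    (hz : ∀ u ∈ I, DifferentiableAt ℝ z u) :
    ∀ u ∈ I, ∀ t : ℝ,
      (pseudoIsoGramDet (fun u' t' =>
          (x u' * Real.cosh (t' * φ) + y u' * Real.sinh (t' * φ),
           x u' * Real.sinh (t' * φ) + y u' * Real.cosh (t' * φ),
           c * t')) u t
        = -(φ ^ 2) * (x u * deriv x u - y u * deriv y u) ^ 2) ∧
      (pseudoIsoGramDet (fun u' t' =>
          (x u' * Real.cosh (t' * φ), x u' * Real.sinh (t' * φ), z u' + c * t')) u t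
        = -(φ ^ 2) * (x u * deriv x u) ^ 2) :=
  pseudoIsotropic_helicoidal_gramDet_general φ c I x y z hx hy hz
end

section
/- Let a, b, c, c₁, c₂ ∈ ℝ with b ≠ 0, and let x, z : I → ℝ be twice differentiable with x'(u) ≠ 0 on I. For the simply isotropic parabolic revolution surface of i-type Z₃(u,t) = (a t + x(u), b t, c t + (a c₁ + b c₂)t²/2 + c₁ t x(u) + z(u)), the isotropic Gaussian and mean curvatures satisfy, for all (u,t): K = −(a c₁ + b c₂)(x''z' − x'z'')/(b² x'³) − c₁²/b² and H = (b c₂ − a c₁)/(2b²) − (a² + b²)(x''z' − x'z'')/(2 b² x'³). -/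
/-- Euclidean cross product on `ℝ × ℝ × ℝ`. -/
def cross3 (p q : ℝ × ℝ × ℝ) : ℝ × ℝ × ℝ :=
  (p.2.1 * q.2.2 - p.2.2 * q.2.1, p.2.2 * q.1 - p.1 * q.2.2, p.1 * q.2.1 - p.2.1 * q.1)

/-- Euclidean inner product on `ℝ × ℝ × ℝ`. -/
def dot3 (p q : ℝ × ℝ × ℝ) : ℝ :=
  p.1 * q.1 + p.2.1 * q.2.1 + p.2.2 * q.2.2

/-- Partial derivative of a parametrized surface in the first variable. -/
noncomputable def partialU (X : ℝ → ℝ → ℝ × ℝ × ℝ) (u t : ℝ) : ℝ × ℝ × ℝ :=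
  deriv (fun u' => X u' t) u

/-- Partial derivative of a parametrized surface in the second variable. -/
noncomputable def partialT (X : ℝ → ℝ → ℝ × ℝ × ℝ) (u t : ℝ) : ℝ × ℝ × ℝ :=
  deriv (fun t' => X u t') t

/-- The relative normal `N_h = (X_u × X_t) / (X_u × X_t)₃`, i.e. the Euclidean cross
product of the partial derivatives normalized to have third component `1`. -/
noncomputable def relNormal (X : ℝ → ℝ → ℝ × ℝ × ℝ) (u t : ℝ) : ℝ × ℝ × ℝ :=
  let n := cross3 (partialU X u t) (partialT X u t)
  (n.1 / n.2.2, n.2.1 / n.2.2, 1)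

/-- Second fundamental form coefficient `h₁₁ = ⟨N_h, X_uu⟩`. -/
noncomputable def h11 (X : ℝ → ℝ → ℝ × ℝ × ℝ) (u t : ℝ) : ℝ :=
  dot3 (relNormal X u t) (deriv (fun u' => partialU X u' t) u)

/-- Second fundamental form coefficient `h₁₂ = ⟨N_h, X_ut⟩`. -/
noncomputable def h12 (X : ℝ → ℝ → ℝ × ℝ × ℝ) (u t : ℝ) : ℝ :=
  dot3 (relNormal X u t) (deriv (fun t' => partialU X u t') t)

/-- Second fundamental form coefficient `h₂₂ = ⟨N_h, X_tt⟩`. -/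
noncomputable def h22 (X : ℝ → ℝ → ℝ × ℝ × ℝ) (u t : ℝ) : ℝ :=
  dot3 (relNormal X u t) (deriv (fun t' => partialT X u t') t)

/-- First fundamental form coefficient `g₁₁ = ⟨X_u, X_u⟩_z` for the simply isotropic
inner product `⟨u,v⟩_z = u₁v₁ + u₂v₂`. -/
noncomputable def g11 (X : ℝ → ℝ → ℝ × ℝ × ℝ) (u t : ℝ) : ℝ :=
  (partialU X u t).1 ^ 2 + (partialU X u t).2.1 ^ 2

/-- First fundamental form coefficient `g₁₂ = ⟨X_u, X_t⟩_z`. -/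
noncomputable def g12 (X : ℝ → ℝ → ℝ × ℝ × ℝ) (u t : ℝ) : ℝ :=
  (partialU X u t).1 * (partialT X u t).1 + (partialU X u t).2.1 * (partialT X u t).2.1

/-- First fundamental form coefficient `g₂₂ = ⟨X_t, X_t⟩_z`. -/
noncomputable def g22 (X : ℝ → ℝ → ℝ × ℝ × ℝ) (u t : ℝ) : ℝ :=
  (partialT X u t).1 ^ 2 + (partialT X u t).2.1 ^ 2

/-- The isotropic Gaussian curvature `K = (h₁₁h₂₂ − h₁₂²)/(g₁₁g₂₂ − g₁₂²)`. -/
noncomputable def Kiso (X : ℝ → ℝ → ℝ × ℝ × ℝ) (u t : ℝ) : ℝ :=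
  (h11 X u t * h22 X u t - h12 X u t ^ 2)
    / (g11 X u t * g22 X u t - g12 X u t ^ 2)

/-- The isotropic mean curvature
`H = (g₁₁h₂₂ − 2g₁₂h₁₂ + g₂₂h₁₁)/(2(g₁₁g₂₂ − g₁₂²))`. -/
noncomputable def Hiso (X : ℝ → ℝ → ℝ × ℝ × ℝ) (u t : ℝ) : ℝ :=
  (g11 X u t * h22 X u t - 2 * g12 X u t * h12 X u t + g22 X u t * h11 X u t)
    / (2 * (g11 X u t * g22 X u t - g12 X u t ^ 2))

/-!
Along the surface `X_u = (x', 0, c₁ t x' + z')` and `X_t = (a, b, ·)`, while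
`X_ut = (0, 0, c₁ x')` and `X_tt = (0, 0, a c₁ + b c₂)` are vertical, so they meet the relative
normal (whose third component is `1`) only in their last coordinate. In `h₁₁ = ⟨N_h, X_uu⟩` the
`c₁ t` terms cancel, leaving `(x' z'' - x'' z') / x'`; together with `g₁₁g₂₂ - g₁₂² = x'² b²`
both curvatures become rational expressions in `x', x'', z', z''`.
-/

open Filter Topology

section Calculus

variable {𝕜 : Type*} [NontriviallyNormedField 𝕜] {F : Type*} [NormedAddCommGroup F]
  [NormedSpace 𝕜 F] {f : 𝕜 → F} {u : 𝕜}

theorem eventually_differentiableAt_of_deriv_ne_zero (hf : ContinuousAt (deriv f) u)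
    (hu : deriv f u ≠ 0) : ∀ᶠ v in 𝓝 u, DifferentiableAt 𝕜 f v :=
  (hf.eventually_ne hu).mono fun _ => differentiableAt_of_deriv_ne_zero

theorem frequently_deriv_eq_zero_of_frequently_not_differentiableAt {l : Filter 𝕜}
    (h : ∃ᶠ v in l, ¬DifferentiableAt 𝕜 f v) : ∃ᶠ v in l, deriv f v = 0 :=
  h.mono fun _ => deriv_zero_of_not_differentiableAt

theorem deriv_eq_zero_of_frequently_not_differentiableAt [NeBot (𝓝[≠] u)]
    (hf : ContinuousAt (deriv f) u) (h : ∃ᶠ v in 𝓝[≠] u, ¬DifferentiableAt 𝕜 f v) :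
    deriv f u = 0 :=
  tendsto_nhds_unique_of_frequently_eq (hf.tendsto.mono_left nhdsWithin_le_nhds)
    tendsto_const_nhds (frequently_deriv_eq_zero_of_frequently_not_differentiableAt h)

theorem deriv_deriv_eq_zero_of_frequently_not_differentiableAt
    (h : ∃ᶠ v in 𝓝[≠] u, ¬DifferentiableAt 𝕜 f v) : deriv (deriv f) u = 0 :=
  deriv_zero_of_frequently_const (frequently_deriv_eq_zero_of_frequently_not_differentiableAt h)

end Calculus

section Surface

variable {X : ℝ → ℝ → ℝ × ℝ × ℝ} {u t p r a b w : ℝ}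

theorem relNormal_eq_of_partials (hb : b ≠ 0) (hU : partialU X u t = (p, 0, r))
    (hT : partialT X u t = (a, b, w)) :
    relNormal X u t = (-r / p, (r * a - p * w) / (p * b), 1) := by
  simp only [relNormal, cross3, hU, hT, zero_mul, zero_sub, sub_zero, Prod.mk.injEq, and_true]
  rw [← neg_mul, mul_div_mul_right _ _ hb]

theorem dot3_relNormal_vertical (m : ℝ) : dot3 (relNormal X u t) (0, 0, m) = m := by
  simp [dot3, relNormal]

theorem g11_mul_g22_sub_g12_sq_of_partials (hU : partialU X u t = (p, 0, r))
    (hT : partialT X u t = (a, b, w)) :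
    g11 X u t * g22 X u t - g12 X u t ^ 2 = p ^ 2 * b ^ 2 := by
  simp only [g11, g22, g12, hU, hT]
  ring

end Surface

noncomputable def parabolicRevolutionIType (a b c c₁ c₂ : ℝ) (x z : ℝ → ℝ) (u t : ℝ) :
    ℝ × ℝ × ℝ :=
  (a * t + x u, b * t, c * t + (a * c₁ + b * c₂) * t ^ 2 / 2 + c₁ * t * x u + z u)

namespace parabolicRevolutionIType

variable {a b c c₁ c₂ : ℝ} {x z : ℝ → ℝ} {u t : ℝ}

theorem partialT_eq (u t : ℝ) :
    partialT (parabolicRevolutionIType a b c c₁ c₂ x z) u t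
      = (a, b, c + (a * c₁ + b * c₂) * t + c₁ * x u) := by
  have h₁ : HasDerivAt (fun t' => a * t' + x u) a t := by
    simpa using ((hasDerivAt_id t).const_mul a).add_const (x u)
  have h₂ : HasDerivAt (fun t' => b * t') b t := by
    simpa using (hasDerivAt_id t).const_mul b
  have h₃ : HasDerivAt
      (fun t' => c * t' + (a * c₁ + b * c₂) * t' ^ 2 / 2 + c₁ * t' * x u + z u)
      (c + (a * c₁ + b * c₂) * t + c₁ * x u) t := by
    refine ((((hasDerivAt_id t).const_mul c).add
      (((hasDerivAt_pow 2 t).const_mul (a * c₁ + b * c₂)).div_const 2)).add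
      (((hasDerivAt_id t).const_mul c₁).mul_const (x u))).add_const (z u) |>.congr_deriv ?_
    norm_num
    ring
  exact (h₁.prodMk (h₂.prodMk h₃)).deriv

theorem deriv_partialT_eq :
    deriv (fun t' => partialT (parabolicRevolutionIType a b c c₁ c₂ x z) u t') t
      = (0, 0, a * c₁ + b * c₂) := by
  rw [show (fun t' => partialT (parabolicRevolutionIType a b c c₁ c₂ x z) u t')
      = fun t' => (a, b, c + (a * c₁ + b * c₂) * t' + c₁ * x u) from funext (partialT_eq u)]
  refine HasDerivAt.deriv ?_
  refine (hasDerivAt_const t a).prodMk ((hasDerivAt_const t b).prodMk ?_)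
  exact (((hasDerivAt_id t).const_mul _).const_add c).add_const _ |>.congr_deriv (by simp)

theorem hasDerivAt_u (t : ℝ) (hx : DifferentiableAt ℝ x u) (hz : DifferentiableAt ℝ z u) :
    HasDerivAt (fun u' => parabolicRevolutionIType a b c c₁ c₂ x z u' t)
      (deriv x u, 0, c₁ * t * deriv x u + deriv z u) u :=
  (hx.hasDerivAt.const_add _).prodMk ((hasDerivAt_const u _).prodMk
    (((hx.hasDerivAt.const_mul (c₁ * t)).const_add _).add hz.hasDerivAt))

theorem partialU_eq (t : ℝ) (hx : DifferentiableAt ℝ x u) (hz : DifferentiableAt ℝ z u) :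
    partialU (parabolicRevolutionIType a b c c₁ c₂ x z) u t
      = (deriv x u, 0, c₁ * t * deriv x u + deriv z u) :=
  (hasDerivAt_u t hx hz).deriv

theorem deriv_partialU_t_eq (hx : DifferentiableAt ℝ x u) (hz : DifferentiableAt ℝ z u) :
    deriv (fun t' => partialU (parabolicRevolutionIType a b c c₁ c₂ x z) u t') t
      = (0, 0, c₁ * deriv x u) := by
  rw [show (fun t' => partialU (parabolicRevolutionIType a b c c₁ c₂ x z) u t')
      = fun t' => (deriv x u, 0, c₁ * t' * deriv x u + deriv z u) from
    funext fun t' => partialU_eq t' hx hz]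
  refine HasDerivAt.deriv ?_
  refine (hasDerivAt_const t _).prodMk ((hasDerivAt_const t _).prodMk ?_)
  exact (((hasDerivAt_id t).const_mul c₁).mul_const _).add_const _ |>.congr_deriv (by simp)

theorem deriv_partialU_u_eq (t : ℝ)
    (hxz : ∀ᶠ v in 𝓝 u, DifferentiableAt ℝ x v ∧ DifferentiableAt ℝ z v)
    (hx' : DifferentiableAt ℝ (deriv x) u) (hz' : DifferentiableAt ℝ (deriv z) u) :
    deriv (fun v => partialU (parabolicRevolutionIType a b c c₁ c₂ x z) v t) u
      = (deriv (deriv x) u, 0, c₁ * t * deriv (deriv x) u + deriv (deriv z) u) := by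
  rw [Filter.EventuallyEq.deriv_eq (hxz.mono fun v hv => partialU_eq t hv.1 hv.2)]
  exact (hx'.hasDerivAt.prodMk ((hasDerivAt_const u _).prodMk
    ((hx'.hasDerivAt.const_mul (c₁ * t)).add hz'.hasDerivAt))).deriv

theorem not_differentiableAt_u (t : ℝ) (hx : DifferentiableAt ℝ x u)
    (hz : ¬DifferentiableAt ℝ z u) :
    ¬DifferentiableAt ℝ (fun u' => parabolicRevolutionIType a b c c₁ c₂ x z u' t) u := by
  refine fun h => hz ?_
  have hz_eq : z = fun u' => (parabolicRevolutionIType a b c c₁ c₂ x z u' t).2.2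
      - (c * t + (a * c₁ + b * c₂) * t ^ 2 / 2 + c₁ * t * x u') := by
    funext u'
    simp only [parabolicRevolutionIType]
    ring
  rw [hz_eq]
  exact h.snd.snd.sub ((hx.const_mul _).const_add _)

theorem deriv_partialU_u_eq_zero (t : ℝ) (hx : ∀ᶠ v in 𝓝 u, DifferentiableAt ℝ x v)
    (hz : ∃ᶠ v in 𝓝[≠] u, ¬DifferentiableAt ℝ z v) :
    deriv (fun v => partialU (parabolicRevolutionIType a b c c₁ c₂ x z) v t) u = 0 :=
  deriv_zero_of_frequently_const <| (hz.and_eventually (nhdsWithin_le_nhds hx)).mono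
    fun _ hv => deriv_zero_of_not_differentiableAt (not_differentiableAt_u t hv.2 hv.1)

-- If `z` fails to be differentiable arbitrarily close to `u`, Lean's convention `deriv = 0` off
-- the differentiability locus makes `X_uu`, `z'(u)` and `z''(u)` all vanish, so both sides are `0`.
theorem h11_eq (t : ℝ) (hb : b ≠ 0) (hx : DifferentiableAt ℝ x u)
    (hx' : DifferentiableAt ℝ (deriv x) u) (hz : DifferentiableAt ℝ z u)
    (hz' : DifferentiableAt ℝ (deriv z) u) (hx0 : deriv x u ≠ 0) :
    h11 (parabolicRevolutionIType a b c c₁ c₂ x z) u t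
      = (deriv x u * deriv (deriv z) u - deriv (deriv x) u * deriv z u) / deriv x u := by
  have hN := relNormal_eq_of_partials (X := parabolicRevolutionIType a b c c₁ c₂ x z) hb
    (partialU_eq t hx hz) (partialT_eq u t)
  have hx_near := eventually_differentiableAt_of_deriv_ne_zero hx'.continuousAt hx0
  by_cases hz_near : ∀ᶠ v in 𝓝[≠] u, DifferentiableAt ℝ z v
  · have hz_nhds : ∀ᶠ v in 𝓝 u, DifferentiableAt ℝ z v := by
      rw [← nhdsNE_sup_pure, eventually_sup, eventually_pure]
      exact ⟨hz_near, hz⟩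
    rw [h11, hN, deriv_partialU_u_eq t (hx_near.and hz_nhds) hx' hz']
    simp only [dot3]
    field_simp
    ring
  · rw [not_eventually] at hz_near
    rw [h11, deriv_partialU_u_eq_zero t hx_near hz_near,
      deriv_eq_zero_of_frequently_not_differentiableAt hz'.continuousAt hz_near,
      deriv_deriv_eq_zero_of_frequently_not_differentiableAt hz_near, mul_zero, mul_zero,
      sub_zero, zero_div]
    exact dot3_relNormal_vertical 0

end parabolicRevolutionIType

/-- Gaussian and mean curvature of the simply isotropic parabolic
revolution surface of i-type
`Z₃(u,t) = (a t + x, b t, c t + (a c₁ + b c₂)t²/2 + c₁ t x + z)`. -/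
theorem simplyIsotropic_parabolicRevolution_iType_curvatures
    (a b c c₁ c₂ : ℝ) (hb : b ≠ 0) (I : Set ℝ) (x z : ℝ → ℝ)
    (hx : ∀ u ∈ I, DifferentiableAt ℝ x u)
    (hx' : ∀ u ∈ I, DifferentiableAt ℝ (deriv x) u)
    (hz : ∀ u ∈ I, DifferentiableAt ℝ z u)
    (hz' : ∀ u ∈ I, DifferentiableAt ℝ (deriv z) u)
    (hx'0 : ∀ u ∈ I, deriv x u ≠ 0) :
    ∀ u ∈ I, ∀ t : ℝ,
      (Kiso (fun u' t' =>
          (a * t' + x u', b * t',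
           c * t' + (a * c₁ + b * c₂) * t' ^ 2 / 2 + c₁ * t' * x u' + z u')) u t
        = -((a * c₁ + b * c₂) *
              (deriv (deriv x) u * deriv z u - deriv x u * deriv (deriv z) u))
            / (b ^ 2 * (deriv x u) ^ 3)
          - c₁ ^ 2 / b ^ 2) ∧
      (Hiso (fun u' t' =>
          (a * t' + x u', b * t',
           c * t' + (a * c₁ + b * c₂) * t' ^ 2 / 2 + c₁ * t' * x u' + z u')) u t
        = (b * c₂ - a * c₁) / (2 * b ^ 2)
          - (a ^ 2 + b ^ 2) *
              (deriv (deriv x) u * deriv z u - deriv x u * deriv (deriv z) u)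
              / (2 * b ^ 2 * (deriv x u) ^ 3)) := by
  intro u hu t
  let S := parabolicRevolutionIType a b c c₁ c₂ x z
  show Kiso S u t = _ ∧ Hiso S u t = _
  have hU : partialU S u t = _ := parabolicRevolutionIType.partialU_eq t (hx u hu) (hz u hu)
  have hT : partialT S u t = _ := parabolicRevolutionIType.partialT_eq u t
  have h₁₁ : h11 S u t = _ := parabolicRevolutionIType.h11_eq t hb (hx u hu) (hx' u hu)
    (hz u hu) (hz' u hu) (hx'0 u hu)
  have h₁₂ : h12 S u t = c₁ * deriv x u := by
    rw [h12, parabolicRevolutionIType.deriv_partialU_t_eq (hx u hu) (hz u hu),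
      dot3_relNormal_vertical]
  have h₂₂ : h22 S u t = a * c₁ + b * c₂ := by
    rw [h22, parabolicRevolutionIType.deriv_partialT_eq, dot3_relNormal_vertical]
  have hx0 := hx'0 u hu
  rw [Kiso, Hiso, g11_mul_g22_sub_g12_sq_of_partials hU hT, h₁₁, h₁₂, h₂₂]
  simp only [g11, g12, g22, hU, hT]
  constructor <;> field_simp <;> ring
end
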